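/- arXiv:math/0302128 — 2 statements merged into one kernel-verified Lean document; each statement's English description precedes it below -/
import Mathlib

section
/- The index of Fredholm operators is locally constant on the space of Fredholm operators with the norm topology; in particular it is constant on connected components. -/
open ContinuousLinearMap Module

variable {H : Type*} [NormedAddCommGroup H] [InnerProductSpace ℂ H] [CompleteSpace H]

/-- A bounded operator is Fredholm if its kernel and cokernel are finite-dimensional. -/
def IsFredholm (A : H →L[ℂ] H) : Prop :=
  FiniteDimensional ℂ (LinearMap.ker (A : H →ₗ[ℂ] H)) ∧ FiniteDimensional ℂ (H ⧸ LinearMap.range (A : H →ₗ[ℂ] H))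

/-- The index of a Fredholm operator: `dim ker A - dim coker A`. -/
noncomputable def fredholmIndex (A : H →L[ℂ] H) : ℤ :=
  (finrank ℂ (LinearMap.ker (A : H →ₗ[ℂ] H)) : ℤ) - (finrank ℂ (H ⧸ LinearMap.range (A : H →ₗ[ℂ] H)) : ℤ)

/-!
If `A` is Fredholm, pick a closed complement `W` of `ker A` and a complement `V` of `range A`
(finite-dimensional). Then `(w, v) ↦ A w + v` is a continuous bijection `W × V → H`, hence an
isomorphism by the open mapping theorem, and isomorphisms form an open set; so
`(w, v) ↦ B w + v` is still bijective for every `B` near `A`. For such `B`, `B` is injective on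
`W` and `B(W)` is complemented by `V`, so the map `H ⧸ W → H ⧸ B(W)` induced by `B` has the same
kernel and cokernel as `B`. Rank–nullity between these finite-dimensional quotients gives
`ind B = dim (H ⧸ W) - dim V`, which does not depend on `B`.
-/

open Filter Topology

namespace LinearMap

variable {k M N : Type*} [DivisionRing k] [AddCommGroup M] [Module k M] [AddCommGroup N]
  [Module k N]

theorem bijective_coprod_subtype_iff (f : M →ₗ[k] N) (W : Submodule k M) (V : Submodule k N) :
    Function.Bijective ((f ∘ₗ W.subtype).coprod V.subtype) ↔
      Disjoint W (ker f) ∧ IsCompl (W.map f) V := by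
  have hrange : range (f ∘ₗ W.subtype) = W.map f := by rw [range_comp, Submodule.range_subtype]
  rw [Function.Bijective, ← ker_eq_bot, ← range_eq_top, range_coprod, hrange,
    Submodule.range_subtype, isCompl_iff, codisjoint_iff, ← and_assoc]
  refine and_congr_left fun _ => ⟨fun h => ⟨?_, ?_⟩, fun ⟨hW, hV⟩ => ?_⟩
  · refine Submodule.disjoint_def.2 fun x hxW hxK => ?_
    have : ((⟨x, hxW⟩, 0) : W × V) ∈ ker ((f ∘ₗ W.subtype).coprod V.subtype) := by
      simpa using hxK
    simpa [h] using this
  · refine Submodule.disjoint_def.2 fun y ⟨x, hxW, hxy⟩ hyV => ?_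
    have : ((⟨x, hxW⟩, -⟨y, hyV⟩) : W × V) ∈ ker ((f ∘ₗ W.subtype).coprod V.subtype) := by
      simp [hxy]
    exact (by simpa [h] using this : _ ∧ _).2
  · rw [ker_coprod_of_disjoint_range _ _ (by rwa [hrange, Submodule.range_subtype]), ker_comp,
      Submodule.ker_subtype, Submodule.disjoint_iff_comap_eq_bot.1 hW, Submodule.prod_bot]

theorem map_eq_range_of_codisjoint_ker (f : M →ₗ[k] N) {W : Submodule k M}
    (hW : Codisjoint W (ker f)) : W.map f = range f := by
  rw [range_eq_map, ← hW.eq_top, Submodule.map_sup, le_ker_iff_map.1 le_rfl, sup_bot_eq]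

noncomputable def quotMap (f : M →ₗ[k] N) (W : Submodule k M) : M ⧸ W →ₗ[k] N ⧸ W.map f :=
  W.mapQ (W.map f) f (Submodule.le_comap_map f W)

variable {f : M →ₗ[k] N} {W : Submodule k M}

noncomputable def kerEquivKerQuotMap (hW : Disjoint W (ker f)) :
    ker f ≃ₗ[k] ker (f.quotMap W) :=
  LinearEquiv.ofBijective (W.mkQ.restrict fun x hx => by simp [quotMap, mem_ker.1 hx]) <| by
    refine ⟨(injective_iff_map_eq_zero _).2 fun x hx => ?_, ?_⟩
    · have hxW : (x : M) ∈ W := (Submodule.Quotient.mk_eq_zero W).1 congr(($hx : M ⧸ W))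
      exact Subtype.ext (Submodule.disjoint_def.1 hW _ hxW x.2)
    · rintro ⟨q, hq⟩
      obtain ⟨m, rfl⟩ := Submodule.Quotient.mk_surjective W q
      obtain ⟨w, hwW, hw⟩ : f m ∈ W.map f := (Submodule.Quotient.mk_eq_zero _).1 hq
      refine ⟨⟨m - w, by simp [hw]⟩, Subtype.ext ?_⟩
      exact (Submodule.Quotient.eq W).2 (by simpa using hwW)

noncomputable def quotientRangeQuotMapEquiv (f : M →ₗ[k] N) (W : Submodule k M) :
    ((N ⧸ W.map f) ⧸ range (f.quotMap W)) ≃ₗ[k] N ⧸ range f :=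
  (Submodule.quotEquivOfEq _ _ (Submodule.range_mapQ _ _ _ _)).trans
    (Submodule.quotientQuotientEquivQuotient _ _ map_le_range)

theorem finiteDimensional_ker_of_disjoint (hW : Disjoint W (ker f))
    [FiniteDimensional k (M ⧸ W)] : FiniteDimensional k (ker f) :=
  Module.Finite.equiv (kerEquivKerQuotMap hW).symm

theorem finrank_ker_sub_finrank_quotient_range (hW : Disjoint W (ker f))
    [FiniteDimensional k (M ⧸ W)] [FiniteDimensional k (N ⧸ W.map f)] :
    (finrank k (ker f) : ℤ) - finrank k (N ⧸ range f) =
      finrank k (M ⧸ W) - finrank k (N ⧸ W.map f) := by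
  rw [(kerEquivKerQuotMap hW).finrank_eq, ← (quotientRangeQuotMapEquiv f W).finrank_eq]
  have hrank := (f.quotMap W).finrank_range_add_finrank_ker
  have hcorank := (range (f.quotMap W)).finrank_quotient_add_finrank
  omega

theorem index_eq_of_bijective_coprod_subtype {V : Submodule k N}
    (hf : Function.Bijective ((f ∘ₗ W.subtype).coprod V.subtype))
    [FiniteDimensional k (M ⧸ W)] [FiniteDimensional k V] :
    FiniteDimensional k (ker f) ∧ FiniteDimensional k (N ⧸ range f) ∧
      (finrank k (ker f) : ℤ) - finrank k (N ⧸ range f) = finrank k (M ⧸ W) - finrank k V := by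
  obtain ⟨hW, hV⟩ := (bijective_coprod_subtype_iff f W V).1 hf
  let e := Submodule.quotientEquivOfIsCompl _ _ hV
  have : FiniteDimensional k (N ⧸ W.map f) := Module.Finite.equiv e.symm
  exact ⟨finiteDimensional_ker_of_disjoint hW, Submodule.CoFG.of_le map_le_range this,
    e.finrank_eq ▸ finrank_ker_sub_finrank_quotient_range hW⟩

end LinearMap

namespace ContinuousLinearMap

section

variable {𝕜 E F : Type*} [NontriviallyNormedField 𝕜] [NormedAddCommGroup E] [NormedSpace 𝕜 E]
  [NormedAddCommGroup F] [NormedSpace 𝕜 F]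

theorem eventually_bijective_coprod_subtypeL [CompleteSpace F] {W : Submodule 𝕜 E}
    {V : Submodule 𝕜 F} [CompleteSpace W] [CompleteSpace V] {A : E →L[𝕜] F}
    (hA : Function.Bijective ((A ∘L W.subtypeL).coprod V.subtypeL)) :
    ∀ᶠ B in 𝓝 A, Function.Bijective ((B ∘L W.subtypeL).coprod V.subtypeL) := by
  let e := ContinuousLinearEquiv.ofBijective ((A ∘L W.subtypeL).coprod V.subtypeL)
    (LinearMap.ker_eq_bot.2 hA.1) (LinearMap.range_eq_top.2 hA.2)
  have hcont : Continuous fun B : E →L[𝕜] F => (B ∘L W.subtypeL).coprod V.subtypeL := by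
    fun_prop
  filter_upwards [hcont.continuousAt.preimage_mem_nhds (ContinuousLinearEquiv.nhds e)]
  rintro B ⟨e', he' : (e' : W × V →L[𝕜] F) = (B ∘L W.subtypeL).coprod V.subtypeL⟩
  rw [← he', ContinuousLinearEquiv.coe_coe]
  exact e'.bijective

end

section

variable {𝕜 E F : Type*} [RCLike 𝕜] [NormedAddCommGroup E] [NormedSpace 𝕜 E]
  [NormedAddCommGroup F] [NormedSpace 𝕜 F]

theorem exists_bijective_coprod_subtypeL (A : E →L[𝕜] F)
    [FiniteDimensional 𝕜 (LinearMap.ker (A : E →ₗ[𝕜] F))]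
    [FiniteDimensional 𝕜 (F ⧸ LinearMap.range (A : E →ₗ[𝕜] F))] :
    ∃ (W : Submodule 𝕜 E) (V : Submodule 𝕜 F), IsClosed (W : Set E) ∧
      FiniteDimensional 𝕜 (E ⧸ W) ∧ FiniteDimensional 𝕜 V ∧
      Function.Bijective ((A ∘L W.subtypeL).coprod V.subtypeL) := by
  obtain ⟨W, hWclosed, hW⟩ :=
    (Submodule.ClosedComplemented.of_finiteDimensional
      (LinearMap.ker (A : E →ₗ[𝕜] F))).exists_isClosed_isCompl
  obtain ⟨V, hV⟩ := Submodule.exists_isCompl (LinearMap.range (A : E →ₗ[𝕜] F))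
  refine ⟨W, V, hWclosed, Module.Finite.equiv (Submodule.quotientEquivOfIsCompl _ _ hW.symm).symm,
    Module.Finite.equiv (Submodule.quotientEquivOfIsCompl _ _ hV), ?_⟩
  refine (LinearMap.bijective_coprod_subtype_iff _ W V).2 ⟨hW.symm.disjoint, ?_⟩
  rwa [LinearMap.map_eq_range_of_codisjoint_ker _ hW.symm.codisjoint]

theorem eventually_index_eq [CompleteSpace E] [CompleteSpace F] (A : E →L[𝕜] F)
    [FiniteDimensional 𝕜 (LinearMap.ker (A : E →ₗ[𝕜] F))]
    [FiniteDimensional 𝕜 (F ⧸ LinearMap.range (A : E →ₗ[𝕜] F))] :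
    ∀ᶠ B : E →L[𝕜] F in 𝓝 A,
      FiniteDimensional 𝕜 (LinearMap.ker (B : E →ₗ[𝕜] F)) ∧
      FiniteDimensional 𝕜 (F ⧸ LinearMap.range (B : E →ₗ[𝕜] F)) ∧
      (finrank 𝕜 (LinearMap.ker (B : E →ₗ[𝕜] F)) : ℤ) -
          finrank 𝕜 (F ⧸ LinearMap.range (B : E →ₗ[𝕜] F)) =
        finrank 𝕜 (LinearMap.ker (A : E →ₗ[𝕜] F)) -
          finrank 𝕜 (F ⧸ LinearMap.range (A : E →ₗ[𝕜] F)) := by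
  obtain ⟨W, V, hWclosed, _, _, hA⟩ := A.exists_bijective_coprod_subtypeL
  have : CompleteSpace W := hWclosed.completeSpace_coe
  have : CompleteSpace V := FiniteDimensional.complete 𝕜 V
  obtain ⟨-, -, hindexA⟩ := LinearMap.index_eq_of_bijective_coprod_subtype hA
  filter_upwards [eventually_bijective_coprod_subtypeL hA] with B hB
  obtain ⟨hker, hcoker, hindexB⟩ := LinearMap.index_eq_of_bijective_coprod_subtype hB
  exact ⟨hker, hcoker, hindexB.trans hindexA.symm⟩

end

end ContinuousLinearMap

/-- The index is locally constant on the space of Fredholm operators (with the norm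
topology), and in particular constant on connected components. -/
theorem fredholmIndex_isLocallyConstant :
    IsLocallyConstant (fun A : {A : H →L[ℂ] H // _root_.IsFredholm A} => fredholmIndex A.1) ∧
    ∀ A B : {A : H →L[ℂ] H // _root_.IsFredholm A}, B ∈ connectedComponent A →
      fredholmIndex B.1 = fredholmIndex A.1 := by
  have hloc : IsLocallyConstant
      (fun A : {A : H →L[ℂ] H // _root_.IsFredholm A} => fredholmIndex A.1) := by
    refine (IsLocallyConstant.iff_eventually_eq _).2 fun A => ?_
    obtain ⟨_, _⟩ := A.2
    exact (continuous_subtype_val.tendsto A).eventually A.1.eventually_index_eq |>.mono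
      fun B hB => hB.2.2
  exact ⟨hloc, fun A B hB =>
    hloc.apply_eq_of_isPreconnected isPreconnected_connectedComponent hB mem_connectedComponent⟩
end

section
/- The space of essentially positive self-adjoint Fredholm operators on a complex Hilbert space (self-adjoint Fredholm operators with only finitely many negative eigenvalues, counted with multiplicity) is a convex-like contractible subspace: it is contractible in the norm topology. -/
/-!
The set is star-convex about the identity, hence contractible. For `a, b ≥ 0` the form of
`B = a • 1 + b • A` lies below `a ‖v‖²` only where the form of `A` is negative, so essential
positivity of `A` bounds the dimension of the subspaces on which `re ⟪B v, v⟫ < a ‖v‖²`. For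
`a > 0` such a bound makes a self-adjoint `B` Fredholm: were `B` not bounded below on the
orthogonal complement of any finite-dimensional subspace, choosing orthogonal vectors on which `B`
is small would produce too many such dimensions. Hence the range of `B` is closed, and its cokernel
is `(range B)ᗮ = ker B`.
-/
open ContinuousLinearMap Module

variable {H : Type*} [NormedAddCommGroup H] [InnerProductSpace ℂ H] [CompleteSpace H]

/-- A self-adjoint operator is essentially positive if it has only finitely many
negative eigenvalues counted with multiplicity: there is a uniform bound on the
dimension of subspaces on which the associated quadratic form is negative definite. -/
def EssentiallyPositive (A : H →L[ℂ] H) : Prop :=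
  ∃ n : ℕ, ∀ V : Submodule ℂ H,
    (∀ v ∈ V, v ≠ 0 → ((inner ℂ (A v) v : ℂ)).re < 0) →
    FiniteDimensional ℂ V ∧ finrank ℂ V ≤ n

section InnerProductSpace

variable {𝕜 E F : Type*} [RCLike 𝕜] [NormedAddCommGroup E] [InnerProductSpace 𝕜 E]
  [NormedAddCommGroup F] [NormedSpace 𝕜 F]

theorem norm_le_norm_add_of_inner_eq_zero {x y : E} (h : inner 𝕜 x y = 0) : ‖x‖ ≤ ‖x + y‖ := by
  have := norm_add_sq_eq_norm_sq_add_norm_sq_of_inner_eq_zero x y h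
  nlinarith [norm_nonneg x, norm_nonneg (x + y), mul_self_nonneg ‖y‖]

theorem norm_apply_le_of_mem_sup_of_le_orthogonal {T : E →L[𝕜] F} {W W' : Submodule 𝕜 E}
    (hWW' : W' ≤ Wᗮ) {δ ε : ℝ} (hδ : 0 ≤ δ) (hε : 0 ≤ ε)
    (hW : ∀ w ∈ W, ‖T w‖ ≤ δ * ‖w‖) (hW' : ∀ w ∈ W', ‖T w‖ ≤ ε * ‖w‖) :
    ∀ x ∈ W ⊔ W', ‖T x‖ ≤ (δ + ε) * ‖x‖ := by
  intro x hx
  obtain ⟨y, hy, z, hz, rfl⟩ := Submodule.mem_sup.mp hx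
  have hyz : inner 𝕜 y z = 0 := Submodule.inner_right_of_mem_orthogonal hy (hWW' hz)
  have hzy : inner 𝕜 z y = 0 := Submodule.inner_left_of_mem_orthogonal hy (hWW' hz)
  have hy_le : ‖y‖ ≤ ‖y + z‖ := norm_le_norm_add_of_inner_eq_zero hyz
  have hz_le : ‖z‖ ≤ ‖y + z‖ := add_comm y z ▸ norm_le_norm_add_of_inner_eq_zero hzy
  calc ‖T (y + z)‖ ≤ ‖T y‖ + ‖T z‖ := by rw [map_add]; exact norm_add_le _ _
    _ ≤ δ * ‖y‖ + ε * ‖z‖ := add_le_add (hW y hy) (hW' z hz)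
    _ ≤ (δ + ε) * ‖y + z‖ := by nlinarith

theorem exists_finrank_eq_of_forall_exists_mem_orthogonal {T : E →L[𝕜] F} {ε : ℝ}
    (h : ∀ K : Submodule 𝕜 E, FiniteDimensional 𝕜 K → ∃ u ∈ Kᗮ, ‖T u‖ < ε * ‖u‖) (m : ℕ) :
    ∃ W : Submodule 𝕜 E, FiniteDimensional 𝕜 W ∧ finrank 𝕜 W = m ∧
      ∀ w ∈ W, ‖T w‖ ≤ m * ε * ‖w‖ := by
  induction m with
  | zero => exact ⟨⊥, inferInstance, finrank_bot 𝕜 E, by simp⟩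
  | succ m ih =>
    obtain ⟨W, hWfin, hWrank, hW⟩ := ih
    obtain ⟨u, hu, hTu⟩ := h W hWfin
    have hu0 : u ≠ 0 := by rintro rfl; simp at hTu
    have hε : 0 < ε := by
      by_contra! hε
      nlinarith [norm_nonneg (T u), norm_pos_iff.mpr hu0]
    have hspan : 𝕜 ∙ u ≤ Wᗮ := (Submodule.span_singleton_le_iff_mem u _).mpr hu
    refine ⟨W ⊔ 𝕜 ∙ u, inferInstance, ?_, ?_⟩
    · have hinf : W ⊓ 𝕜 ∙ u = ⊥ := eq_bot_iff.mpr fun x hx =>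
        (Submodule.inf_orthogonal_eq_bot W).le ⟨hx.1, hspan hx.2⟩
      have := Submodule.finrank_sup_add_finrank_inf_eq W (𝕜 ∙ u)
      rw [hinf, finrank_bot, finrank_span_singleton hu0] at this
      omega
    · have hTspan : ∀ z ∈ 𝕜 ∙ u, ‖T z‖ ≤ ε * ‖z‖ := by
        intro z hz
        obtain ⟨a, rfl⟩ := Submodule.mem_span_singleton.mp hz
        rw [map_smul, norm_smul, norm_smul]
        nlinarith [norm_nonneg a]
      have := norm_apply_le_of_mem_sup_of_le_orthogonal hspan (by positivity) hε.le hW hTspan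
      push_cast
      simpa [add_mul] using this

variable [CompleteSpace E]

theorem isClosed_range_of_le_norm_apply_orthogonal {T : E →L[𝕜] F} {K : Submodule 𝕜 E}
    [FiniteDimensional 𝕜 K] {c : ℝ} (hc : 0 < c) (hT : ∀ u ∈ Kᗮ, c * ‖u‖ ≤ ‖T u‖) :
    IsClosed (LinearMap.range (T : E →ₗ[𝕜] F) : Set F) := by
  have : Kᗮ.CoFG :=
    Submodule.FG.cofg_of_isCompl K.isCompl_orthogonal (Module.Finite.iff_fg.mp ‹_›)
  refine LinearMap.isClosed_range_of_isClosed_map_of_finiteDimensional_quotient (s := Kᗮ) ?_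
  have hanti : AntilipschitzWith (Real.toNNReal c⁻¹) (T ∘L Kᗮ.subtypeL) :=
    (T ∘L Kᗮ.subtypeL).antilipschitz_of_bound fun u => by
      rw [Real.coe_toNNReal _ (by positivity), ← div_eq_inv_mul, le_div_iff₀' hc]
      exact hT u u.2
  have hclosed := hanti.isClosed_range (T ∘L Kᗮ.subtypeL).uniformContinuous
  rwa [coe_comp, Set.range_comp, Submodule.coe_subtypeL, Submodule.coe_subtype,
    Subtype.range_coe] at hclosed

theorem IsSelfAdjoint.finiteDimensional_quotient_range {T : E →L[𝕜] E} (hT : IsSelfAdjoint T)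
    (hrange : IsClosed (LinearMap.range (T : E →ₗ[𝕜] E) : Set E))
    [FiniteDimensional 𝕜 (LinearMap.ker (T : E →ₗ[𝕜] E))] :
    FiniteDimensional 𝕜 (E ⧸ LinearMap.range (T : E →ₗ[𝕜] E)) := by
  have : CompleteSpace (LinearMap.range (T : E →ₗ[𝕜] E)) := hrange.completeSpace_coe
  have hcompl := (LinearMap.range (T : E →ₗ[𝕜] E)).isCompl_orthogonal
  rw [orthogonal_range, hT.adjoint_eq] at hcompl
  exact (Submodule.quotientEquivOfIsCompl _ _ hcompl).symm.finiteDimensional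

end InnerProductSpace

section NegativeIndex

variable {E : Type*} [NormedAddCommGroup E] [InnerProductSpace ℂ E]

/-- The negative index of the form `v ↦ re ⟪B v, v⟫ - s ‖v‖²` is at most `n`. -/
def NegIndexLE (B : E →L[ℂ] E) (s : ℝ) (n : ℕ) : Prop :=
  ∀ V : Submodule ℂ E, (∀ v ∈ V, v ≠ 0 → (inner ℂ (B v) v).re < s * ‖v‖ ^ 2) →
    FiniteDimensional ℂ V ∧ finrank ℂ V ≤ n

theorem re_inner_smul_one_add_smul_apply_self (A : E →L[ℂ] E) (a b : ℝ) (v : E) :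
    (inner ℂ ((a • 1 + b • A) v) v).re = a * ‖v‖ ^ 2 + b * (inner ℂ (A v) v).re := by
  simp [← Complex.ofReal_pow]

theorem negIndexLE_one : NegIndexLE (1 : E →L[ℂ] E) 1 0 := by
  intro V hV
  have hV0 : V = ⊥ := eq_bot_iff.mpr fun v hv => by
    by_contra hv0
    have := hV v hv hv0
    simp [← Complex.ofReal_pow] at this
  subst hV0
  simp only [finrank_bot, le_refl, and_true]
  infer_instance

theorem essentiallyPositive_iff_exists_negIndexLE {A : E →L[ℂ] E} :
    EssentiallyPositive A ↔ ∃ n, NegIndexLE A 0 n := by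
  simp [EssentiallyPositive, NegIndexLE]

namespace NegIndexLE

variable {A B : E →L[ℂ] E} {s : ℝ} {n : ℕ}

theorem mono (h : NegIndexLE B s n) {s' : ℝ} (hs : s' ≤ s) : NegIndexLE B s' n :=
  fun V hV => h V fun v hv hv0 => (hV v hv hv0).trans_le (by gcongr)

theorem smul_one_add_smul (h : NegIndexLE A 0 n) (a : ℝ) {b : ℝ} (hb : 0 ≤ b) :
    NegIndexLE (a • 1 + b • A) a n := by
  refine fun V hV => h V fun v hv hv0 => ?_
  have := hV v hv hv0
  rw [re_inner_smul_one_add_smul_apply_self] at this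
  rw [zero_mul]
  by_contra! hA
  nlinarith [mul_nonneg hb hA]

theorem finiteDimensional_ker (h : NegIndexLE B s n) (hs : 0 < s) :
    FiniteDimensional ℂ (LinearMap.ker (B : E →ₗ[ℂ] E)) :=
  (h _ fun v hv hv0 => by
    rw [LinearMap.mem_ker, coe_coe] at hv
    simp only [hv, inner_zero_left, Complex.zero_re]
    positivity).1

theorem exists_le_norm_apply_orthogonal (h : NegIndexLE B s n) (hs : 0 < s) :
    ∃ K : Submodule ℂ E, FiniteDimensional ℂ K ∧ ∃ c > 0, ∀ u ∈ Kᗮ, c * ‖u‖ ≤ ‖B u‖ := by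
  by_contra! hcon
  set ε := s / (n + 2)
  obtain ⟨W, hWfin, hWrank, hW⟩ := exists_finrank_eq_of_forall_exists_mem_orthogonal
    (fun K hK => hcon K hK ε (by positivity)) (n + 1)
  have hneg : ∀ w ∈ W, w ≠ 0 → (inner ℂ (B w) w).re < s * ‖w‖ ^ 2 := by
    intro w hw hw0
    have hw' : 0 < ‖w‖ := norm_pos_iff.mpr hw0
    have hε : (n + 1) * ε < s := by
      rw [mul_div_assoc', div_lt_iff₀ (by positivity)]
      linarith
    calc (inner ℂ (B w) w).re ≤ ‖B w‖ * ‖w‖ := by simpa using re_inner_le_norm (𝕜 := ℂ) (B w) w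
      _ ≤ (n + 1) * ε * ‖w‖ * ‖w‖ := by gcongr; exact_mod_cast hW w hw
      _ = (n + 1) * ε * ‖w‖ ^ 2 := by ring
      _ < s * ‖w‖ ^ 2 := by gcongr
  have := (h W hneg).2
  omega

theorem isFredholm [CompleteSpace E] (h : NegIndexLE B s n) (hs : 0 < s)
    (hB : IsSelfAdjoint B) : _root_.IsFredholm B := by
  have := h.finiteDimensional_ker hs
  obtain ⟨K, hK, c, hc, hBK⟩ := h.exists_le_norm_apply_orthogonal hs
  exact ⟨this,
    hB.finiteDimensional_quotient_range (isClosed_range_of_le_norm_apply_orthogonal hc hBK)⟩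

end NegIndexLE

end NegativeIndex

theorem IsSelfAdjoint.real_smul {A : H →L[ℂ] H} (hA : IsSelfAdjoint A) (a : ℝ) :
    IsSelfAdjoint (a • A) := by
  rw [← Complex.coe_smul]
  exact IsSelfAdjoint.smul (Complex.conj_ofReal a) hA

theorem starConvex_essentiallyPositive :
    StarConvex ℝ 1
      {A : H →L[ℂ] H | IsSelfAdjoint A ∧ _root_.IsFredholm A ∧ EssentiallyPositive A} := by
  rintro A ⟨hA, hAF, hAP⟩ a b ha hb hab
  obtain ⟨n, hAn⟩ := essentiallyPositive_iff_exists_negIndexLE.mp hAP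
  have hBn := hAn.smul_one_add_smul a hb
  have hB : IsSelfAdjoint (a • 1 + b • A) :=
    ((IsSelfAdjoint.one _).real_smul a).add (hA.real_smul b)
  refine ⟨hB, ?_, essentiallyPositive_iff_exists_negIndexLE.mpr ⟨n, hBn.mono ha⟩⟩
  rcases ha.eq_or_lt with rfl | ha
  · obtain rfl : b = 1 := by linarith
    simpa using hAF
  · exact hBn.isFredholm ha hB

theorem contractible_essentially_positive_general :
    ContractibleSpace
      {A : H →L[ℂ] H // IsSelfAdjoint A ∧ _root_.IsFredholm A ∧ EssentiallyPositive A} := by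
  have hone : IsSelfAdjoint (1 : H →L[ℂ] H) ∧ _root_.IsFredholm (1 : H →L[ℂ] H) ∧
      EssentiallyPositive (1 : H →L[ℂ] H) :=
    ⟨IsSelfAdjoint.one _, negIndexLE_one.isFredholm one_pos (IsSelfAdjoint.one _),
      essentiallyPositive_iff_exists_negIndexLE.mpr ⟨0, negIndexLE_one.mono zero_le_one⟩⟩
  exact (starConvex_essentiallyPositive (H := H)).contractibleSpace ⟨1, hone⟩

/-- The space `F̂₊` of essentially positive self-adjoint Fredholm operators on an
infinite-dimensional separable Hilbert space is contractible in the norm topology. -/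
theorem contractible_essentially_positive
    [TopologicalSpace.SeparableSpace H] (hinf : ¬ FiniteDimensional ℂ H) :
    ContractibleSpace
      {A : H →L[ℂ] H // IsSelfAdjoint A ∧ _root_.IsFredholm A ∧ EssentiallyPositive A} :=
  contractible_essentially_positive_general
end
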